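/- (Cigler's identity.) For every natural number n ≥ 1, the following identity holds in ℤ[q][X]: ∏_{j=0}^{n-1} (X − 1 + q^j) = Σ_{k=1}^{n} S^{cigl}_q(n,k) · ∏_{i=0}^{k-1} (X − i), where S^{cigl}_q(n,k) = Σ_{π} q^{w(π)}, the sum being over all set partitions π of {0,1,…,n−1} into exactly k (nonempty) blocks, and w(π) denotes the sum of the elements of the block of π containing 0. -/

import Mathlib

open Finset Polynomial
variable {n : ℕ}



lemma mem_range_of_mem_parts {P : Finpartition (Finset.range n)} {t : Finset ℕ}
    (ht : t ∈ P.parts) {x : ℕ} (hx : x ∈ t) : x < n := by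
  have := P.le ht hx
  simpa using this

lemma not_top_mem_parts {P : Finpartition (Finset.range n)} {t : Finset ℕ}
    (ht : t ∈ P.parts) : n ∉ t := fun h => lt_irrefl n (mem_range_of_mem_parts ht h)

/-- Insert `n` into the part `t` of a partition of `range n`. -/
def insPart (P : Finpartition (Finset.range n)) (t : Finset ℕ) (ht : t ∈ P.parts) :
    Finpartition (Finset.range (n+1)) where
  parts := insert (insert n t) (P.parts.erase t)
  supIndep := by
    rw [Finset.supIndep_iff_pairwiseDisjoint, coe_insert]
    refine Set.PairwiseDisjoint.insert (P.disjoint.subset (by simp [Finset.erase_subset])) ?_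
    intro u hu _
    simp only [Finset.coe_erase, Set.mem_diff, Finset.mem_coe, Set.mem_singleton_iff] at hu
    have hdis : Disjoint t u := P.disjoint ht hu.1 (fun h => hu.2 h.symm)
    simp only [id]
    rw [Finset.disjoint_insert_left]
    exact ⟨not_top_mem_parts hu.1, hdis⟩
  sup_parts := by
    have hE : t ⊔ (P.parts.erase t).sup id = Finset.range n := by
      conv_rhs => rw [← P.sup_parts, ← Finset.insert_erase ht, Finset.sup_insert]
      rfl
    rw [Finset.sup_insert, id, Finset.sup_eq_union, Finset.insert_union]
    rw [Finset.sup_eq_union] at hE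
    rw [hE, Finset.range_add_one]
  bot_notMem := by
    simp only [bot_eq_empty, Finset.mem_insert]
    rintro (h | h)
    · exact Finset.insert_ne_empty _ _ h.symm
    · exact P.bot_notMem (Finset.mem_of_mem_erase h)

/-- Add `{n}` as a new singleton part. -/
def addSing (P : Finpartition (Finset.range n)) : Finpartition (Finset.range (n+1)) :=
  P.extend (b := {n}) (by simp) (by simp)
    (by rw [Finset.sup_eq_union, Finset.range_add_one, Finset.insert_eq, Finset.union_comm])

lemma addSing_parts (P : Finpartition (Finset.range n)) :
    (addSing P).parts = insert {n} P.parts := rfl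

lemma insPart_parts (P : Finpartition (Finset.range n)) (t : Finset ℕ) (ht : t ∈ P.parts) :
    (insPart P t ht).parts = insert (insert n t) (P.parts.erase t) := rfl

lemma range_sdiff_top (n : ℕ) : Finset.range (n+1) \ {n} = Finset.range n := by
  ext x
  simp only [Finset.mem_sdiff, Finset.mem_range, Finset.mem_singleton]
  omega

/-- Remove `n` from a partition of `range (n+1)`. -/
def eraseTop (P' : Finpartition (Finset.range (n+1))) : Finpartition (Finset.range n) :=
  (P'.avoid {n}).copy (range_sdiff_top n)

lemma mem_eraseTop {P' : Finpartition (Finset.range (n+1))} {c : Finset ℕ} :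
    c ∈ (eraseTop P').parts ↔ ∃ d ∈ P'.parts, ¬ d ⊆ {n} ∧ d \ {n} = c := by
  rw [eraseTop]
  simp only [Finpartition.copy_parts]
  rw [Finpartition.mem_avoid]

lemma not_subset_top {P : Finpartition (Finset.range n)} {t : Finset ℕ}
    (ht : t ∈ P.parts) : ¬ t ⊆ {n} := by
  intro hsub
  obtain ⟨x, hx⟩ := P.nonempty_of_mem_parts ht
  have := Finset.mem_singleton.1 (hsub hx)
  exact absurd (mem_range_of_mem_parts ht hx) (by omega)

lemma sdiff_top_eq {P : Finpartition (Finset.range n)} {t : Finset ℕ}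
    (ht : t ∈ P.parts) : t \ {n} = t := by
  rw [← Finset.erase_eq, Finset.erase_eq_of_notMem (not_top_mem_parts ht)]

lemma top_mem_range : n ∈ Finset.range (n+1) := by simp

lemma part_addSing (P : Finpartition (Finset.range n)) :
    (addSing P).part n = {n} :=
  Finpartition.part_eq_of_mem _ (Finset.mem_insert_self _ _) (Finset.mem_singleton_self n)

lemma part_insPart (P : Finpartition (Finset.range n)) (t : Finset ℕ) (ht : t ∈ P.parts) :
    (insPart P t ht).part n = insert n t :=
  Finpartition.part_eq_of_mem _ (Finset.mem_insert_self _ _) (Finset.mem_insert_self _ _)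

lemma insert_top_ne_sing (P : Finpartition (Finset.range n)) {t : Finset ℕ}
    (ht : t ∈ P.parts) : insert n t ≠ {n} := by
  obtain ⟨x, hx⟩ := P.nonempty_of_mem_parts ht
  intro h
  have : x ∈ insert n t := Finset.mem_insert_of_mem hx
  rw [h, Finset.mem_singleton] at this
  exact absurd (mem_range_of_mem_parts ht hx) (by omega)

lemma eraseTop_addSing (P : Finpartition (Finset.range n)) :
    eraseTop (addSing P) = P := by
  ext u
  rw [mem_eraseTop]
  constructor
  · rintro ⟨d, hd, hd2, rfl⟩
    rw [addSing_parts, Finset.mem_insert] at hd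
    rcases hd with rfl | hd
    · exact absurd (Finset.Subset.refl _) hd2
    · rwa [sdiff_top_eq hd]
  · intro hu
    exact ⟨u, Finset.mem_insert_of_mem hu, not_subset_top hu, sdiff_top_eq hu⟩

lemma eraseTop_insPart (P : Finpartition (Finset.range n)) (t : Finset ℕ) (ht : t ∈ P.parts) :
    eraseTop (insPart P t ht) = P := by
  ext u
  rw [mem_eraseTop]
  constructor
  · rintro ⟨d, hd, hd2, rfl⟩
    rw [insPart_parts, Finset.mem_insert] at hd
    rcases hd with rfl | hd
    · rw [← Finset.erase_eq, Finset.erase_insert (not_top_mem_parts ht)]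
      exact ht
    · rw [sdiff_top_eq (Finset.mem_of_mem_erase hd)]
      exact Finset.mem_of_mem_erase hd
  · intro hu
    by_cases hut : u = t
    · subst hut
      refine ⟨insert n u, Finset.mem_insert_self _ _, ?_, ?_⟩
      · intro hsub
        exact not_subset_top hu (fun x hx => hsub (Finset.mem_insert_of_mem hx))
      · rw [← Finset.erase_eq, Finset.erase_insert (not_top_mem_parts hu)]
    · exact ⟨u, Finset.mem_insert_of_mem (Finset.mem_erase.2 ⟨hut, hu⟩),
        not_subset_top hu, sdiff_top_eq hu⟩

/-- The inverse map of the fiber decomposition. -/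
def inv1 : (Σ P : Finpartition (Finset.range n), Option {t // t ∈ P.parts}) →
    Finpartition (Finset.range (n+1))
  | ⟨P, none⟩ => addSing P
  | ⟨P, some t⟩ => insPart P t.1 t.2

lemma eraseTop_inv1 (x : Σ P : Finpartition (Finset.range n), Option {t // t ∈ P.parts}) :
    eraseTop (inv1 x) = x.1 := by
  obtain ⟨P, o⟩ := x
  cases o with
  | none => exact eraseTop_addSing P
  | some t => exact eraseTop_insPart P t.1 t.2

lemma inv1_injective :
    Function.Injective (inv1 (n := n)) := by
  intro x y h
  obtain ⟨P, o⟩ := x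
  obtain ⟨Q, o'⟩ := y
  have hPQ : P = Q := by
    have e1 := eraseTop_inv1 ⟨P, o⟩
    have e2 := eraseTop_inv1 ⟨Q, o'⟩
    simp only at e1 e2
    rw [← e1, ← e2, h]
  subst hPQ
  have hpart := congrArg (fun P' => Finpartition.part P' n) h
  cases o with
  | none =>
    cases o' with
    | none => rfl
    | some t =>
      simp only [inv1, part_addSing, part_insPart] at hpart
      exact absurd hpart.symm (insert_top_ne_sing P t.2)
  | some t =>
    cases o' with
    | none =>
      simp only [inv1, part_addSing, part_insPart] at hpart
      exact absurd hpart (insert_top_ne_sing P t.2)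
    | some u =>
      simp only [inv1, part_insPart] at hpart
      have : t.1 = u.1 := by
        have h1 := congrArg (fun s => Finset.erase s n) hpart
        simpa [Finset.erase_insert (not_top_mem_parts t.2),
          Finset.erase_insert (not_top_mem_parts u.2)] using h1
      rw [Subtype.ext this]

lemma part_top_mem (P' : Finpartition (Finset.range (n+1))) :
    P'.part n ∈ P'.parts := P'.part_mem.2 top_mem_range

lemma top_mem_part_top (P' : Finpartition (Finset.range (n+1))) :
    n ∈ P'.part n := P'.mem_part top_mem_range

lemma part_eq_top_part {P' : Finpartition (Finset.range (n+1))} {u : Finset ℕ}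
    (hu : u ∈ P'.parts) (hnu : n ∈ u) : u = P'.part n :=
  (Finpartition.part_eq_of_mem _ hu hnu).symm

lemma inv1_surjective :
    Function.Surjective (inv1 (n := n)) := by
  intro P'
  by_cases h : P'.part n = {n}
  · refine ⟨⟨eraseTop P', none⟩, ?_⟩
    show addSing (eraseTop P') = P'
    ext u
    rw [addSing_parts, Finset.mem_insert]
    constructor
    · rintro (rfl | hu)
      · rw [← h]; exact part_top_mem P'
      · rw [mem_eraseTop] at hu
        obtain ⟨d, hd, hd2, rfl⟩ := hu
        have hnd : n ∉ d := by
          intro hnd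
          exact hd2 ((part_eq_top_part hd hnd).trans h ▸ Finset.Subset.refl _)
        rwa [← Finset.erase_eq, Finset.erase_eq_of_notMem hnd]
    · intro hu
      by_cases hus : u = {n}
      · exact Or.inl hus
      · have hnu : n ∉ u := fun hnu => hus ((part_eq_top_part hu hnu).trans h)
        refine Or.inr (mem_eraseTop.2 ⟨u, hu, ?_, ?_⟩)
        · intro hsub
          obtain ⟨x, hx⟩ := P'.nonempty_of_mem_parts hu
          rcases Finset.subset_singleton_iff.1 hsub with rfl | rfl
          · exact absurd hx (Finset.notMem_empty x)
          · exact hus rfl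
        · rw [← Finset.erase_eq, Finset.erase_eq_of_notMem hnu]
  · -- the part containing n is not {n}
    have hmem : (P'.part n).erase n ∈ (eraseTop P').parts := by
      refine mem_eraseTop.2 ⟨P'.part n, part_top_mem P', ?_, (Finset.erase_eq _ _).symm⟩
      intro hsub
      rcases Finset.subset_singleton_iff.1 hsub with h0 | h0
      · exact absurd (h0 ▸ top_mem_part_top P') (Finset.notMem_empty n)
      · exact h h0
    refine ⟨⟨eraseTop P', some ⟨(P'.part n).erase n, hmem⟩⟩, ?_⟩
    show insPart (eraseTop P') _ hmem = P'
    have hins : insert n ((P'.part n).erase n) = P'.part n :=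
      Finset.insert_erase (top_mem_part_top P')
    have htne : ((P'.part n).erase n).Nonempty := by
      obtain ⟨x, hx1, hx2⟩ := Finset.not_subset.1 (fun hsub => by
        rcases Finset.subset_singleton_iff.1 hsub with h0 | h0
        · exact absurd (h0 ▸ top_mem_part_top P') (Finset.notMem_empty n)
        · exact h h0)
      exact ⟨x, Finset.mem_erase.2 ⟨fun hh => hx2 (hh ▸ Finset.mem_singleton_self n), hx1⟩⟩
    ext u
    rw [insPart_parts, Finset.mem_insert, hins]
    constructor
    · rintro (rfl | hu)
      · exact part_top_mem P'
      · have hu1 := Finset.mem_of_mem_erase hu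
        have hune := Finset.ne_of_mem_erase hu
        rw [mem_eraseTop] at hu1
        obtain ⟨d, hd, hd2, rfl⟩ := hu1
        have hnd : n ∉ d := by
          intro hnd
          exact hune (by rw [part_eq_top_part hd hnd, Finset.erase_eq])
        rwa [← Finset.erase_eq, Finset.erase_eq_of_notMem hnd]
    · intro hu
      by_cases hup : u = P'.part n
      · exact Or.inl hup
      · have hnu : n ∉ u := fun hnu => hup (part_eq_top_part hu hnu)
        refine Or.inr (Finset.mem_erase.2 ⟨?_, mem_eraseTop.2 ⟨u, hu, ?_, ?_⟩⟩)
        · intro heq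
          obtain ⟨x, hx⟩ := htne
          have hxu : x ∈ u := heq ▸ hx
          have hxp : x ∈ P'.part n := Finset.mem_of_mem_erase hx
          exact hup (P'.eq_of_mem_parts hu (part_top_mem P') hxu hxp)
        · intro hsub
          rcases Finset.subset_singleton_iff.1 hsub with h0 | h0
          · exact P'.bot_notMem (by rwa [h0] at hu)
          · exact hnu (h0 ▸ Finset.mem_singleton_self n)
        · rw [← Finset.erase_eq, Finset.erase_eq_of_notMem hnu]

lemma sum_split {M : Type*} [AddCommMonoid M] (f : Finpartition (Finset.range (n+1)) → M) :
    ∑ P' : Finpartition (Finset.range (n+1)), f P'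
    = ∑ P : Finpartition (Finset.range n),
        (f (addSing P) + ∑ t ∈ P.parts.attach, f (insPart P t.1 t.2)) := by
  rw [← Function.Bijective.sum_comp ⟨inv1_injective, inv1_surjective⟩ f]
  rw [← Finset.univ_sigma_univ, Finset.sum_sigma]
  refine Finset.sum_congr rfl fun P _ => ?_
  rw [Fintype.sum_option]
  rw [Finset.univ_eq_attach]
  rfl

/-- The weight of a set partition `P` of `{0,1,…,n−1}`: the sum of the elements of the
block containing `0`. -/
def ciglerWeight {n : ℕ} (P : Finpartition (Finset.range n)) : ℕ :=
  ∑ t ∈ P.parts.filter (fun t => (0 : ℕ) ∈ t), ∑ l ∈ t, l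

/-- The Cigler q-Stirling numbers of the second kind:
`S^{cigl}_q(n,k) = Σ_{π ∈ A_{n,k}} q^{w(π)} ∈ ℤ[q]`, summed over all partitions of
`{0,…,n−1}` into exactly `k` nonempty blocks, where `w(π)` is the sum of the elements of
the block containing `0`. -/
noncomputable def ciglerStirling (n k : ℕ) : Polynomial ℤ :=
  ∑ P : Finpartition (Finset.range n),
    if P.parts.card = k then Polynomial.X ^ ciglerWeight P else 0

lemma card_addSing (P : Finpartition (Finset.range n)) :
    (addSing P).parts.card = P.parts.card + 1 := by
  rw [addSing_parts, Finset.card_insert_of_notMem]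
  intro h
  exact not_top_mem_parts h (Finset.mem_singleton_self n)

lemma card_insPart (P : Finpartition (Finset.range n)) (t : Finset ℕ) (ht : t ∈ P.parts) :
    (insPart P t ht).parts.card = P.parts.card := by
  rw [insPart_parts, Finset.card_insert_of_notMem, Finset.card_erase_of_mem ht]
  · have : 1 ≤ P.parts.card := Finset.card_pos.2 ⟨t, ht⟩
    omega
  · intro h
    exact not_top_mem_parts (Finset.mem_of_mem_erase h) (Finset.mem_insert_self n t)

lemma weight_addSing (hn : 1 ≤ n) (P : Finpartition (Finset.range n)) :
    ciglerWeight (addSing P) = ciglerWeight P := by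
  unfold ciglerWeight
  rw [addSing_parts, Finset.filter_insert]
  rw [if_neg (by simp; omega)]

lemma filter_part0 (hn : 1 ≤ n) (P : Finpartition (Finset.range n)) :
    P.parts.filter (fun t => (0 : ℕ) ∈ t) = {P.part 0} := by
  have h0 : (0 : ℕ) ∈ Finset.range n := by simp; omega
  ext u
  simp only [Finset.mem_filter, Finset.mem_singleton]
  constructor
  · rintro ⟨hu, h0u⟩
    exact Finpartition.part_eq_of_mem _ hu h0u |>.symm
  · rintro rfl
    exact ⟨P.part_mem.2 h0, P.mem_part h0⟩

lemma weight_insPart_of_mem (hn : 1 ≤ n) (P : Finpartition (Finset.range n)) (t : Finset ℕ)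
    (ht : t ∈ P.parts) (h0 : 0 ∈ t) : ciglerWeight (insPart P t ht) = n + ciglerWeight P := by
  have hpart : P.part 0 = t := Finpartition.part_eq_of_mem _ ht h0
  unfold ciglerWeight
  rw [insPart_parts, Finset.filter_insert, if_pos (Finset.mem_insert_of_mem h0),
    Finset.filter_erase, filter_part0 hn, hpart, Finset.erase_singleton]
  rw [show (insert (insert n t) (∅ : Finset (Finset ℕ))) = {insert n t} from rfl,
    Finset.sum_singleton, Finset.sum_insert (not_top_mem_parts ht), Finset.sum_singleton]

lemma weight_insPart_of_not_mem (hn : 1 ≤ n) (P : Finpartition (Finset.range n)) (t : Finset ℕ)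
    (ht : t ∈ P.parts) (h0 : 0 ∉ t) : ciglerWeight (insPart P t ht) = ciglerWeight P := by
  unfold ciglerWeight
  rw [insPart_parts, Finset.filter_insert,
    if_neg (by rw [Finset.mem_insert]; push_neg; exact ⟨by omega, h0⟩),
    Finset.filter_erase, Finset.erase_eq_of_notMem]
  simp only [Finset.mem_filter]
  tauto

noncomputable def fallP (k : ℕ) : Polynomial (Polynomial ℤ) :=
  ∏ i ∈ Finset.range k, (Polynomial.X - (i : Polynomial (Polynomial ℤ)))

lemma fallP_succ (k : ℕ) :
    fallP (k+1) = fallP k * (Polynomial.X - (k : Polynomial (Polynomial ℤ))) := by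
  rw [fallP, fallP, Finset.prod_range_succ]

lemma card_parts_pos {m : ℕ} (hm : 1 ≤ m) (P : Finpartition (Finset.range m)) :
    1 ≤ P.parts.card := by
  refine Finset.card_pos.2 (P.parts_nonempty ?_)
  simp only [bot_eq_empty, ne_eq, Finset.range_eq_empty_iff]
  omega

lemma G_aux : ∀ m : ℕ, 1 ≤ m →
    (∏ j ∈ Finset.range m,
        (Polynomial.X - 1 + Polynomial.C (Polynomial.X ^ j) :
          Polynomial (Polynomial ℤ))) =
    ∑ P : Finpartition (Finset.range m),
      Polynomial.C (Polynomial.X ^ ciglerWeight P) * fallP P.parts.card := by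
  intro m hm1
  induction m, hm1 using Nat.le_induction with
  | base =>
    have huniq : ∀ P : Finpartition (Finset.range 1), P.parts = {{0}} := by
      intro P
      have key : ∀ u ∈ P.parts, u = ({0} : Finset ℕ) := by
        intro u hu
        have hsub : u ⊆ {0} := by
          intro x hx
          have := mem_range_of_mem_parts hu hx
          simp only [Finset.mem_singleton]; omega
        rcases Finset.subset_singleton_iff.1 hsub with rfl | rfl
        · exact absurd hu P.bot_notMem
        · rfl
      ext u
      simp only [Finset.mem_singleton]
      constructor
      · exact key u
      · rintro rfl
        obtain ⟨t, ht⟩ := P.parts_nonempty (by simp)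
        rw [← key t ht]; exact ht
    haveI : Subsingleton (Finpartition (Finset.range 1)) :=
      ⟨fun P Q => Finpartition.ext (by rw [huniq P, huniq Q])⟩
    haveI : Unique (Finpartition (Finset.range 1)) := uniqueOfSubsingleton ⊥
    rw [Fintype.sum_unique]
    have hparts := huniq (default : Finpartition (Finset.range 1))
    have hw : ciglerWeight (default : Finpartition (Finset.range 1)) = 0 := by
      rw [ciglerWeight, hparts]
      simp
    have hc : (default : Finpartition (Finset.range 1)).parts.card = 1 := by
      rw [hparts]; rfl
    rw [hw, hc, fallP]
    simp
  | succ m hm ih =>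
    rw [Finset.prod_range_succ, ih]
    rw [sum_split (fun P' => Polynomial.C (Polynomial.X ^ ciglerWeight P') * fallP P'.parts.card)]
    rw [Finset.sum_mul]
    refine Finset.sum_congr rfl fun P _ => ?_
    set k := P.parts.card with hk
    have hk1 : 1 ≤ k := card_parts_pos hm P
    set w := ciglerWeight P with hwdef
    -- the addSing term
    have h1 : Polynomial.C (Polynomial.X ^ ciglerWeight (addSing P)) * fallP (addSing P).parts.card
        = Polynomial.C (Polynomial.X ^ w) * (fallP k * (Polynomial.X - (k : Polynomial (Polynomial ℤ)))) := by
      rw [weight_addSing hm, card_addSing, fallP_succ]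
    -- the insPart terms
    have h2 : ∑ t ∈ P.parts.attach,
        Polynomial.C (Polynomial.X ^ ciglerWeight (insPart P t.1 t.2)) * fallP (insPart P t.1 t.2).parts.card
        = Polynomial.C (Polynomial.X ^ (m + w)) * fallP k
          + (k - 1) • (Polynomial.C (Polynomial.X ^ w) * fallP k) := by
      have step : ∀ t ∈ P.parts.attach,
          Polynomial.C (Polynomial.X ^ ciglerWeight (insPart P t.1 t.2)) * fallP (insPart P t.1 t.2).parts.card
          = if (0 : ℕ) ∈ t.1 then Polynomial.C (Polynomial.X ^ (m + w)) * fallP k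
            else Polynomial.C (Polynomial.X ^ w) * fallP k := by
        intro t _
        by_cases h0 : (0 : ℕ) ∈ t.1
        · rw [if_pos h0, weight_insPart_of_mem hm P t.1 t.2 h0, card_insPart]
        · rw [if_neg h0, weight_insPart_of_not_mem hm P t.1 t.2 h0, card_insPart]
      rw [Finset.sum_congr rfl step]
      rw [Finset.sum_attach P.parts (fun u => if (0:ℕ) ∈ u then Polynomial.C (Polynomial.X ^ (m + w)) * fallP k
            else Polynomial.C (Polynomial.X ^ w) * fallP k)]
      rw [Finset.sum_ite, Finset.sum_const, Finset.sum_const]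
      rw [filter_part0 hm]
      have hcard : (P.parts.filter (fun t => ¬ (0:ℕ) ∈ t)).card = k - 1 := by
        have := Finset.card_filter_add_card_filter_not
          (s := P.parts) (p := fun t => (0:ℕ) ∈ t)
        rw [filter_part0 hm] at this
        simp only [Finset.card_singleton] at this
        omega
      rw [hcard, Finset.card_singleton, one_smul]
    rw [h1, h2]
    have hcast : ((k - 1 : ℕ) : Polynomial (Polynomial ℤ)) = (k : Polynomial (Polynomial ℤ)) - 1 := by
      push_cast [hk1]
      ring
    rw [nsmul_eq_mul, hcast, pow_add, map_mul]
    ring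

/-- Cigler's identity: for `n ≥ 1`, in `ℤ[q][X]`,
`∏_{j=0}^{n-1} (X − 1 + q^j) = Σ_{k=1}^{n} S^{cigl}_q(n,k) · ∏_{i=0}^{k-1} (X − i)`. -/
theorem cigler_identity (n : ℕ) (hn : 1 ≤ n) :
    (∏ j ∈ Finset.range n,
        (Polynomial.X - 1 + Polynomial.C (Polynomial.X ^ j) :
          Polynomial (Polynomial ℤ))) =
      ∑ k ∈ Finset.Icc 1 n, Polynomial.C (ciglerStirling n k) *
        ∏ i ∈ Finset.range k, (Polynomial.X - (i : Polynomial (Polynomial ℤ))) := by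
  rw [G_aux n hn]
  have hfall : ∀ k : ℕ, (∏ i ∈ Finset.range k,
      (Polynomial.X - (i : Polynomial (Polynomial ℤ)))) = fallP k := fun _ => rfl
  simp only [hfall, ciglerStirling, map_sum, Finset.sum_mul, apply_ite Polynomial.C,
    map_zero, ite_mul, zero_mul]
  rw [Finset.sum_comm]
  refine Finset.sum_congr rfl fun P _ => ?_
  rw [Finset.sum_ite_eq (Finset.Icc 1 n) P.parts.card
    (fun k => Polynomial.C (Polynomial.X ^ ciglerWeight P) * fallP k)]
  rw [if_pos]
  rw [Finset.mem_Icc]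
  refine ⟨card_parts_pos hn P, ?_⟩
  have := P.card_parts_le_card
  simpa using this
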